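/- Let D_1 = δ + Σ_{k=0}^d μ_k ∂_k and D_2 = Σ_{k=0}^d ν_k ∂_k with μ_k, ν_k ∈ K. Then ⁅D_1, D_2⁆ = 0 if and only if ν_k = 0 for all 1 ≤ k ≤ d. -/
import Mathlib

open MvPolynomial Finset

/-- The derivation `δ = (∏_{j=3}^m x_j^{α_{j1}}) ∂/∂x_1` of `K[x_1, …, x_m]`
(variables are indexed by `Fin m`, so `x_1` is `X ⟨0,_⟩`, `x_2` is `X ⟨1,_⟩`, and the
indices `3 ≤ j ≤ m` are those `j : Fin m` with `2 ≤ j.val`). -/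
noncomputable def deltaD (K : Type*) [Field K] (m : ℕ) (hm : 2 ≤ m) (α1 : Fin m → ℕ) :
    Derivation K (MvPolynomial (Fin m) K) (MvPolynomial (Fin m) K) :=
  (∏ j ∈ Finset.univ.filter (fun j : Fin m => 2 ≤ j.val),
      (X j : MvPolynomial (Fin m) K) ^ α1 j) • pderiv (⟨0, by omega⟩ : Fin m)

/-- The derivation `∂_k = x_1^k (∏_{j=3}^m x_j^{α_{j2} - k α_{j1}}) ∂/∂x_2`. -/
noncomputable def partialD (K : Type*) [Field K] (m : ℕ) (hm : 2 ≤ m)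
    (α1 α2 : Fin m → ℕ) (k : ℕ) :
    Derivation K (MvPolynomial (Fin m) K) (MvPolynomial (Fin m) K) :=
  ((X (⟨0, by omega⟩ : Fin m) : MvPolynomial (Fin m) K) ^ k *
      ∏ j ∈ Finset.univ.filter (fun j : Fin m => 2 ≤ j.val),
        (X j : MvPolynomial (Fin m) K) ^ (α2 j - k * α1 j)) •
    pderiv (⟨1, by omega⟩ : Fin m)

namespace Stmt13Aux

variable {K : Type*} [Field K] {m : ℕ}

abbrev D' (K : Type*) [Field K] (m : ℕ) :=
  Derivation K (MvPolynomial (Fin m) K) (MvPolynomial (Fin m) K)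

lemma d_add_lie (x y z : D' K m) : ⁅x + y, z⁆ = ⁅x, z⁆ + ⁅y, z⁆ := add_lie x y z

lemma d_smul_lie (r : K) (x y : D' K m) : ⁅r • x, y⁆ = r • ⁅x, y⁆ := smul_lie r x y

lemma d_lie_smul (r : K) (x y : D' K m) : ⁅x, r • y⁆ = r • ⁅x, y⁆ := lie_smul r x y

lemma d_lie_zero (x : D' K m) : ⁅x, (0 : D' K m)⁆ = 0 := lie_zero x

lemma d_zero_lie (x : D' K m) : ⁅(0 : D' K m), x⁆ = 0 := zero_lie x

lemma my_lie_sum {ι : Type*} (s : Finset ι) (f : ι → D' K m) (x : D' K m) :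
    ⁅x, ∑ i ∈ s, f i⁆ = ∑ i ∈ s, ⁅x, f i⁆ := by
  induction s using Finset.cons_induction with
  | empty => rw [Finset.sum_empty, Finset.sum_empty]; exact d_lie_zero x
  | cons a s h ih =>
      rw [Finset.sum_cons, Finset.sum_cons, ← ih]
      exact lie_add x (f a) (∑ i ∈ s, f i)

lemma my_sum_lie {ι : Type*} (s : Finset ι) (f : ι → D' K m) (x : D' K m) :
    ⁅∑ i ∈ s, f i, x⁆ = ∑ i ∈ s, ⁅f i, x⁆ := by
  induction s using Finset.cons_induction with
  | empty => rw [Finset.sum_empty, Finset.sum_empty]; exact d_zero_lie x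
  | cons a s h ih =>
      rw [Finset.sum_cons, Finset.sum_cons, ← ih]
      exact add_lie (f a) (∑ i ∈ s, f i) x

lemma my_sum_apply {ι : Type*} (s : Finset ι)
    (f : ι → Derivation K (MvPolynomial (Fin m) K) (MvPolynomial (Fin m) K))
    (a : MvPolynomial (Fin m) K) : (∑ i ∈ s, f i) a = ∑ i ∈ s, f i a := by
  induction s using Finset.cons_induction with
  | empty => simp
  | cons i s hi ih => rw [Finset.sum_cons, Finset.sum_cons, Derivation.add_apply, ih]

lemma prodX_eq_monomial (s : Finset (Fin m)) (f : Fin m → ℕ) :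
    (∏ j ∈ s, (X j : MvPolynomial (Fin m) K) ^ f j) =
      monomial (∑ j ∈ s, Finsupp.single j (f j)) (1 : K) := by
  induction s using Finset.cons_induction with
  | empty => simp
  | cons a s ha ih =>
      rw [Finset.prod_cons, Finset.sum_cons, ih, X_pow_eq_monomial, monomial_mul, one_mul]

lemma sum_single_apply_of_not_mem {s : Finset (Fin m)} {i : Fin m} (hi : i ∉ s) (f : Fin m → ℕ) :
    (∑ j ∈ s, Finsupp.single j (f j)) i = 0 := by
  rw [Finsupp.finset_sum_apply]
  exact Finset.sum_eq_zero fun j hj => Finsupp.single_eq_of_ne (fun h => hi (h ▸ hj))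

lemma pderiv_prodX {i : Fin m} {s : Finset (Fin m)} (hi : i ∉ s) (f : Fin m → ℕ) :
    pderiv i (∏ j ∈ s, (X j : MvPolynomial (Fin m) K) ^ f j) = 0 := by
  rw [prodX_eq_monomial, pderiv_monomial, sum_single_apply_of_not_mem hi]
  simp

lemma not_mem_S (hm : 2 ≤ m) (v : ℕ) (hv : v < 2) (hvm : v < m) :
    (⟨v, hvm⟩ : Fin m) ∉ Finset.univ.filter (fun j : Fin m => 2 ≤ j.val) := by
  simp [Finset.mem_filter]; omega

lemma ne01 (hm : 2 ≤ m) : (⟨0, by omega⟩ : Fin m) ≠ (⟨1, by omega⟩ : Fin m) := by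
  simp

lemma pd1_coeff (hm : 2 ≤ m) (k : ℕ) (β : Fin m → ℕ) :
    pderiv (⟨1, by omega⟩ : Fin m)
      ((X (⟨0, by omega⟩ : Fin m) : MvPolynomial (Fin m) K) ^ k *
        ∏ j ∈ Finset.univ.filter (fun j : Fin m => 2 ≤ j.val), X j ^ β j) = 0 := by
  have h1 : pderiv (⟨1, by omega⟩ : Fin m)
      ((X (⟨0, by omega⟩ : Fin m) : MvPolynomial (Fin m) K) ^ k) = 0 := by
    rw [Derivation.leibniz_pow, pderiv_X_of_ne (ne01 hm), smul_zero, smul_zero]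
  rw [pderiv_mul, h1, zero_mul,
    pderiv_prodX (not_mem_S hm 1 (by omega) (by omega)), mul_zero, add_zero]

lemma lie_partial_partial (hm : 2 ≤ m) (α1 α2 : Fin m → ℕ) (k l : ℕ) :
    ⁅partialD K m hm α1 α2 k, partialD K m hm α1 α2 l⁆ = 0 := by
  refine derivation_ext fun i => ?_
  rw [Derivation.commutator_apply]
  by_cases h : i = (⟨1, by omega⟩ : Fin m)
  · subst h
    have hap : ∀ n : ℕ, partialD K m hm α1 α2 n (X (⟨1, by omega⟩ : Fin m)) =
        (X (⟨0, by omega⟩ : Fin m) : MvPolynomial (Fin m) K) ^ n *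
          ∏ j ∈ Finset.univ.filter (fun j : Fin m => 2 ≤ j.val),
            X j ^ (α2 j - n * α1 j) := by
      intro n
      rw [partialD, Derivation.smul_apply, pderiv_X_self, smul_eq_mul, mul_one]
    rw [hap, hap, partialD, partialD, Derivation.smul_apply, Derivation.smul_apply,
      pd1_coeff hm, pd1_coeff hm, smul_zero, smul_zero, sub_zero, Derivation.zero_apply]
  · have hz : ∀ n : ℕ, partialD K m hm α1 α2 n (X i) = 0 := by
      intro n
      rw [partialD, Derivation.smul_apply, pderiv_X_of_ne h, smul_zero]
    rw [hz, hz, map_zero, map_zero, sub_zero, Derivation.zero_apply]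

lemma lie_delta_partial (hm : 2 ≤ m) (α1 α2 : Fin m → ℕ) (k : ℕ)
    (hk : ∀ j : Fin m, 2 ≤ j.val → k * α1 j ≤ α2 j) :
    ⁅deltaD K m hm α1, partialD K m hm α1 α2 k⁆ =
      (k : K) • partialD K m hm α1 α2 (k - 1) := by
  refine derivation_ext fun i => ?_
  rw [Derivation.commutator_apply, Derivation.smul_apply]
  by_cases h : i = (⟨1, by omega⟩ : Fin m)
  · subst h
    have hδX : deltaD K m hm α1 (X (⟨1, by omega⟩ : Fin m)) = 0 := by
      rw [deltaD, Derivation.smul_apply, pderiv_X_of_ne (Ne.symm (ne01 hm)), smul_zero]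
    have hap : ∀ n : ℕ, partialD K m hm α1 α2 n (X (⟨1, by omega⟩ : Fin m)) =
        (X (⟨0, by omega⟩ : Fin m) : MvPolynomial (Fin m) K) ^ n *
          ∏ j ∈ Finset.univ.filter (fun j : Fin m => 2 ≤ j.val),
            X j ^ (α2 j - n * α1 j) := by
      intro n
      rw [partialD, Derivation.smul_apply, pderiv_X_self, smul_eq_mul, mul_one]
    rw [hδX, map_zero, sub_zero, hap, hap]
    rcases Nat.eq_zero_or_pos k with hk0 | hk1
    · subst hk0
      rw [deltaD, Derivation.smul_apply, pow_zero, one_mul, Nat.cast_zero, zero_smul,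
        pderiv_prodX (not_mem_S hm 0 (by omega) (by omega)), smul_zero]
    · rw [deltaD, Derivation.smul_apply, pderiv_mul,
        pderiv_prodX (not_mem_S hm 0 (by omega) (by omega)), mul_zero, add_zero,
        Derivation.leibniz_pow, pderiv_X_self]
      rw [smul_eq_mul, mul_comm
        ((∏ j ∈ Finset.univ.filter (fun j : Fin m => 2 ≤ j.val),
          (X j : MvPolynomial (Fin m) K) ^ α1 j))]
      rw [smul_eq_mul, mul_one, ← Nat.cast_smul_eq_nsmul K k, smul_mul_assoc, smul_mul_assoc]
      congr 1
      rw [mul_assoc, ← Finset.prod_mul_distrib]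
      congr 1
      refine Finset.prod_congr rfl fun j hj => ?_
      rw [← pow_add]
      congr 1
      have := hk j (by simpa using hj)
      have h1 : 1 ≤ k := hk1
      have hmul : k * α1 j = (k - 1) * α1 j + α1 j := by
        conv_lhs => rw [← Nat.succ_pred_eq_of_pos hk1]
        rw [Nat.succ_mul, Nat.pred_eq_sub_one]
      omega
  · have hpz : partialD K m hm α1 α2 k (X i) = 0 := by
      rw [partialD, Derivation.smul_apply, pderiv_X_of_ne h, smul_zero]
    have hpz' : partialD K m hm α1 α2 (k - 1) (X i) = 0 := by
      rw [partialD, Derivation.smul_apply, pderiv_X_of_ne h, smul_zero]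
    rw [hpz, hpz', map_zero, smul_zero, zero_sub]
    by_cases h0 : i = (⟨0, by omega⟩ : Fin m)
    · subst h0
      rw [deltaD, Derivation.smul_apply, pderiv_X_self, smul_eq_mul, mul_one,
        partialD, Derivation.smul_apply,
        pderiv_prodX (not_mem_S hm 1 (by omega) (by omega)), smul_zero, neg_zero]
    · rw [deltaD, Derivation.smul_apply, pderiv_X_of_ne h0, smul_zero, map_zero, neg_zero]

end Stmt13Aux

open Stmt13Aux in
/-- For `D_1 = δ + Σ_{k=0}^d μ_k ∂_k` and `D_2 = Σ_{k=0}^d ν_k ∂_k`,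
the bracket `⁅D_1, D_2⁆` vanishes iff `ν_k = 0` for all `1 ≤ k ≤ d`. -/
theorem stmt13 (K : Type*) [Field K] [CharZero K] (m : ℕ) (hm : 2 ≤ m)
    (α1 α2 : Fin m → ℕ) (d : ℕ) (hd : 1 ≤ d)
    (hα : ∀ j : Fin m, 2 ≤ j.val → d * α1 j ≤ α2 j)
    (μ ν : ℕ → K) :
    ⁅deltaD K m hm α1 + ∑ k ∈ Finset.range (d + 1), μ k • partialD K m hm α1 α2 k,
        ∑ k ∈ Finset.range (d + 1), ν k • partialD K m hm α1 α2 k⁆ = 0 ↔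
      ∀ k : ℕ, 1 ≤ k → k ≤ d → ν k = 0 := by
  have hb : ⁅deltaD K m hm α1 + ∑ k ∈ Finset.range (d + 1), μ k • partialD K m hm α1 α2 k,
      ∑ k ∈ Finset.range (d + 1), ν k • partialD K m hm α1 α2 k⁆ =
      ∑ k ∈ Finset.range (d + 1), (ν k * k) • partialD K m hm α1 α2 (k - 1) := by
    rw [d_add_lie]
    have h2 : ⁅∑ k ∈ Finset.range (d + 1), μ k • partialD K m hm α1 α2 k,
        ∑ k ∈ Finset.range (d + 1), ν k • partialD K m hm α1 α2 k⁆ = 0 := by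
      rw [my_sum_lie]
      refine Finset.sum_eq_zero fun k _ => ?_
      rw [my_lie_sum]
      refine Finset.sum_eq_zero fun l _ => ?_
      rw [d_smul_lie, d_lie_smul, lie_partial_partial hm, smul_zero, smul_zero]
    rw [h2, add_zero, my_lie_sum]
    refine Finset.sum_congr rfl fun k hk => ?_
    have hkd : k ≤ d := by simpa [Nat.lt_succ_iff] using hk
    rw [d_lie_smul, lie_delta_partial hm α1 α2 k
      (fun j hj => le_trans (Nat.mul_le_mul_right _ hkd) (hα j hj)), smul_smul]
  rw [hb]
  constructor
  · intro h k hk1 hkd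
    -- apply the derivation identity to X ⟨1,_⟩ and extract a coefficient
    have happ := congrArg (fun D : Derivation K (MvPolynomial (Fin m) K)
        (MvPolynomial (Fin m) K) => D (X (⟨1, by omega⟩ : Fin m))) h
    simp only [my_sum_apply, Derivation.zero_apply] at happ
    have hap : ∀ n : ℕ, partialD K m hm α1 α2 n (X (⟨1, by omega⟩ : Fin m)) =
        monomial (Finsupp.single (⟨0, by omega⟩ : Fin m) n +
          ∑ j ∈ Finset.univ.filter (fun j : Fin m => 2 ≤ j.val),
            Finsupp.single j (α2 j - n * α1 j)) (1 : K) := by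
      intro n
      rw [partialD, Derivation.smul_apply, pderiv_X_self, smul_eq_mul, mul_one,
        prodX_eq_monomial, X_pow_eq_monomial, monomial_mul, one_mul]
    set E : ℕ → (Fin m →₀ ℕ) := fun n => Finsupp.single (⟨0, by omega⟩ : Fin m) (n - 1) +
      ∑ j ∈ Finset.univ.filter (fun j : Fin m => 2 ≤ j.val),
        Finsupp.single j (α2 j - (n - 1) * α1 j) with hE
    have hE0 : ∀ n : ℕ, E n (⟨0, by omega⟩ : Fin m) = n - 1 := by
      intro n
      rw [hE]
      simp only [Finsupp.add_apply, Finsupp.single_eq_same,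
        sum_single_apply_of_not_mem (not_mem_S hm 0 (by omega) (by omega)), add_zero]
    have happ2 : ∑ l ∈ Finset.range (d + 1), monomial (E l) (ν l * l) = 0 := by
      rw [← happ]
      refine Finset.sum_congr rfl fun l _ => ?_
      rw [Derivation.smul_apply, hap, smul_monomial, smul_eq_mul, mul_one]
    have hc := congrArg (fun p => coeff (E k) p) happ2
    simp only [coeff_sum, coeff_monomial, coeff_zero] at hc
    rw [Finset.sum_eq_single_of_mem k (Finset.mem_range.mpr (by omega)), if_pos rfl] at hc
    · have hkne : ((k : K)) ≠ 0 := Nat.cast_ne_zero.mpr (by omega)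
      exact (mul_eq_zero.mp hc).resolve_right hkne
    · intro l _ hlk
      rcases Nat.eq_zero_or_pos l with h0 | h1
      · subst h0; simp
      · rw [if_neg]
        intro hEl
        have := congrArg (fun f : Fin m →₀ ℕ => f (⟨0, by omega⟩ : Fin m)) hEl
        simp only [hE0] at this
        omega
  · intro h
    refine Finset.sum_eq_zero fun k hk => ?_
    have hkd : k ≤ d := by simpa [Nat.lt_succ_iff] using hk
    rcases Nat.eq_zero_or_pos k with h0 | h1
    · subst h0; simp
    · rw [h k h1 hkd, zero_mul, zero_smul]
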